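/- For integers n and m with 2 ≤ m ≤ n−1, the Stirling numbers of the second kind satisfy the strict inequality (m−1)(n−m) · S(n,m)² > (m+1)(n−m+1) · S(n,m−1) · S(n,m+1). -/

import Mathlib

/-!
Induct on `n` through the recurrence `S(n+1, j) = j S(n, j) + S(n, j-1)`. The non-strict
inequality at `n`, for `m` and for `m - 1`, bounds each of the two factors
`S(n+1, m-1)` and `S(n+1, m+1)` on the left at `n + 1` in terms of `S(n, m-1)` and `S(n, m)`.
What remains is a quadratic form in these two numbers, which is an explicit sum of squares and
is strictly positive since `S(n, m) > 0`. Strictness at `n + 1` therefore comes for free, and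
the non-strict inequality starts from the boundary cases `m = 1` and `m = n`.
-/

/-- Stirling numbers of the second kind. -/
def S : ℕ → ℕ → ℕ
  | 0, 0 => 1
  | 0, _ + 1 => 0
  | _ + 1, 0 => 0
  | n + 1, k + 1 => (k + 1) * S n (k + 1) + S n k

theorem S_eq_stirlingSecond : S = Nat.stirlingSecond := by
  funext n k
  induction n generalizing k with
  | zero => cases k <;> rfl
  | succ n ih => cases k <;> simp [S, Nat.stirlingSecond_succ_succ, ih]

section SibuyaStep

variable {R : Type*} [CommRing R] [LinearOrder R] [IsStrictOrderedRing R]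

theorem sibuya_quadratic_lt {k e a b : R} (hk : 0 ≤ k) (he : 0 ≤ e) (hb : 0 < b) :
    (k + 3) * (((k + 1) * (k + 2) * (e + 2) * b + k * (e + 1) * a) *
        ((k + 1) * e * b + (e + 1) * a)) <
      (k + 1) * (k + 2) * (e + 1) ^ 2 * ((k + 2) * b + a) ^ 2 := by
  -- Twice the difference of the two sides is
  -- `(2 (e + 1) a + (k + 1) (e - k - 2) b) ^ 2 + (k + 1) (k + 3) ((k + e + 2) b) ^ 2`.
  have hpos : 0 < (k + 1) * (k + 3) * ((k + e + 2) * b) ^ 2 := by positivity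
  nlinarith [sq_nonneg (2 * (e + 1) * a + (k + 1) * (e - k - 2) * b)]

theorem sibuya_step {k e A a b c : R} (hk : 0 ≤ k) (he : 0 ≤ e) (ha : 0 < a)
    (hb : 0 < b) (hc : 0 ≤ c)
    (H1 : (k + 3) * (e + 1) * (a * c) ≤ (k + 1) * e * b ^ 2)
    (H2 : (k + 2) * (e + 2) * (A * b) ≤ k * (e + 1) * a ^ 2) :
    (k + 3) * (e + 2) * (((k + 1) * a + A) * ((k + 3) * c + b)) <
      (k + 1) * (e + 1) * ((k + 2) * b + a) ^ 2 := by
  -- `H2` and `H1` bound the two factors on the left by `a X / ((k + 2) (e + 2) b)` and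
  -- `b Y / ((e + 1) a)`.
  set X := (k + 1) * (k + 2) * (e + 2) * b + k * (e + 1) * a
  set Y := (k + 1) * e * b + (e + 1) * a
  have hX : (k + 2) * (e + 2) * b * ((k + 1) * a + A) ≤ a * X := by linear_combination H2
  have hY : (e + 1) * a * ((k + 3) * c + b) ≤ b * Y := by linear_combination H1
  have hXY : (k + 2) * (e + 1) * (e + 2) * (((k + 1) * a + A) * ((k + 3) * c + b)) ≤ X * Y := by
    refine le_of_mul_le_mul_left ?_ (mul_pos ha hb)
    linear_combination mul_le_mul hX hY (by positivity) (by positivity)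
  refine lt_of_mul_lt_mul_left ?_ (by positivity : (0 : R) ≤ (k + 2) * (e + 1))
  calc (k + 2) * (e + 1) * ((k + 3) * (e + 2) * (((k + 1) * a + A) * ((k + 3) * c + b)))
      = (k + 3) * ((k + 2) * (e + 1) * (e + 2) * (((k + 1) * a + A) * ((k + 3) * c + b))) := by
        ring
    _ ≤ (k + 3) * (X * Y) := by gcongr
    _ < (k + 1) * (k + 2) * (e + 1) ^ 2 * ((k + 2) * b + a) ^ 2 := sibuya_quadratic_lt hk he hb
    _ = (k + 2) * (e + 1) * ((k + 1) * (e + 1) * ((k + 2) * b + a) ^ 2) := by ring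

end SibuyaStep

namespace Nat

theorem stirlingSecond_pos {n k : ℕ} (hk : 0 < k) (hkn : k ≤ n) : 0 < stirlingSecond n k := by
  induction n with
  | zero => omega
  | succ n ih =>
    rcases hkn.lt_or_eq with hlt | rfl
    · rw [stirlingSecond_succ_left n k hk.ne']
      exact Nat.add_pos_left (Nat.mul_pos hk (ih (by omega))) _
    · rw [stirlingSecond_self]
      exact one_pos

theorem stirlingSecond_succ_sibuya_lt {n k e : ℕ} (hkn : k + 2 ≤ n)
    (H1 : (k + 3) * (e + 1) * (stirlingSecond n (k + 1) * stirlingSecond n (k + 3)) ≤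
      (k + 1) * e * stirlingSecond n (k + 2) ^ 2)
    (H2 : (k + 2) * (e + 2) * (stirlingSecond n k * stirlingSecond n (k + 2)) ≤
      k * (e + 1) * stirlingSecond n (k + 1) ^ 2) :
    (k + 3) * (e + 2) * (stirlingSecond (n + 1) (k + 1) * stirlingSecond (n + 1) (k + 3)) <
      (k + 1) * (e + 1) * stirlingSecond (n + 1) (k + 2) ^ 2 := by
  have e2 : stirlingSecond (n + 1) (k + 2) =
      (k + 2) * stirlingSecond n (k + 2) + stirlingSecond n (k + 1) :=
    stirlingSecond_succ_succ n (k + 1)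
  have e3 : stirlingSecond (n + 1) (k + 3) =
      (k + 3) * stirlingSecond n (k + 3) + stirlingSecond n (k + 2) :=
    stirlingSecond_succ_succ n (k + 2)
  rw [stirlingSecond_succ_succ n k, e2, e3]
  have ha := stirlingSecond_pos (by omega : 0 < k + 1) (by omega : k + 1 ≤ n)
  have hb := stirlingSecond_pos (by omega : 0 < k + 2) hkn
  exact_mod_cast sibuya_step (A := (stirlingSecond n k : ℤ)) (c := (stirlingSecond n (k + 3) : ℤ))
    k.cast_nonneg e.cast_nonneg (Int.natCast_pos.mpr ha) (Int.natCast_pos.mpr hb)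
    (Int.natCast_nonneg _) (by exact_mod_cast H1) (by exact_mod_cast H2)

-- The non-strict inequality for `m = j + 1` and `n - m = e`; it degenerates to `0 ≤ 0` when
-- `j = 0` or `e = 0`, which gives the induction its base cases.
theorem stirlingSecond_sibuya_le : ∀ {n j e : ℕ}, n = j + e + 1 →
    (j + 2) * (e + 1) * (stirlingSecond n j * stirlingSecond n (j + 2)) ≤
      j * e * stirlingSecond n (j + 1) ^ 2
  | _, 0, _, rfl => by simp
  | _, j + 1, 0, rfl => by simp [stirlingSecond_eq_zero_of_lt]
  | n, j + 1, e + 1, hn => by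
    obtain rfl : n = j + e + 2 + 1 := by omega
    exact (stirlingSecond_succ_sibuya_lt (by omega) (stirlingSecond_sibuya_le (by omega))
      (stirlingSecond_sibuya_le (by omega))).le
termination_by _ j e => j + e

end Nat

theorem stirling2_sibuya_ineq (n m : ℕ) (h2 : 2 ≤ m) (hm : m ≤ n - 1) :
    (m + 1) * (n - m + 1) * (S n (m - 1) * S n (m + 1)) <
      (m - 1) * (n - m) * S n m ^ 2 := by
  obtain ⟨k, rfl⟩ : ∃ k, m = k + 2 := ⟨m - 2, by omega⟩
  obtain ⟨e, rfl⟩ : ∃ e, n = k + e + 3 := ⟨n - k - 3, by omega⟩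
  rw [S_eq_stirlingSecond, show k + e + 3 - (k + 2) = e + 1 by omega]
  exact Nat.stirlingSecond_succ_sibuya_lt (n := k + e + 2) (by omega)
    (Nat.stirlingSecond_sibuya_le (by omega)) (Nat.stirlingSecond_sibuya_le (by omega))
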